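/- Let N = (L_1, M_1), …, (L_r, M_r) (r ≥ 1) be a special convenient integral Newton-polygon datum satisfying conditions (A1)–(A3), and set γ_0 := 1 + M_1 + ⋯ + M_r and γ_i := (1 + M_1 + ⋯ + M_{i−1})·L_i/M_i for i = 1, …, r. Then, with e_k := gcd(γ_0, …, γ_k) and n_k := e_{k−1}/e_k, one has (n_k − 1)·γ_k = L_k and n_1⋯n_{k−1}·(n_k − 1) = M_k for every 1 ≤ k ≤ r; that is, the Merle datum of (γ_0, …, γ_r) equals N. -/
import Mathlib


/-- A canonical Newton-polygon datum with `r` edges: a pair of `1`-indexed sequences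
`(L, M)` of positive rationals with strictly increasing inclinations `L k / M k`. -/
def IsCanonicalNP (p : (ℕ → ℚ) × (ℕ → ℚ)) (r : ℕ) : Prop :=
  (∀ k, 1 ≤ k → k ≤ r → 0 < p.1 k ∧ 0 < p.2 k) ∧
  ∀ k, 1 ≤ k → k < r → p.1 k / p.2 k < p.1 (k + 1) / p.2 (k + 1)

/-- An integral datum: all the entries are positive integers. -/
def IsIntegralNP (p : (ℕ → ℚ) × (ℕ → ℚ)) (r : ℕ) : Prop :=
  ∀ k, 1 ≤ k → k ≤ r →
    (∃ a : ℕ, 0 < a ∧ p.1 k = a) ∧ (∃ b : ℕ, 0 < b ∧ p.2 k = b)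

/-- A special datum: all the inclinations are greater than `1`. -/
def IsSpecialNP (p : (ℕ → ℚ) × (ℕ → ℚ)) (r : ℕ) : Prop :=
  ∀ k, 1 ≤ k → k ≤ r → 1 < p.1 k / p.2 k

/-- A special convenient integral Newton-polygon datum with `r` edges. -/
def IsSCI (p : (ℕ → ℚ) × (ℕ → ℚ)) (r : ℕ) : Prop :=
  IsCanonicalNP p r ∧ IsIntegralNP p r ∧ IsSpecialNP p r

/-- The height `ht(N) = M_1 + ⋯ + M_r` of a Newton-polygon datum with `r` edges. -/
def htNP (p : (ℕ → ℚ) × (ℕ → ℚ)) (r : ℕ) : ℚ := ∑ k ∈ Finset.Icc 1 r, p.2 k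

/-- The abrasion `A(N)` of a datum with `r` edges:
`L̃_i = ((1 + M_1 + ⋯ + M_{r−1})/(1 + M_1 + ⋯ + M_r))·L_i`, the `M_i` are unchanged. -/
def abrNP (p : (ℕ → ℚ) × (ℕ → ℚ)) (r : ℕ) : (ℕ → ℚ) × (ℕ → ℚ) :=
  (fun i => ((1 + ∑ k ∈ Finset.Icc 1 (r - 1), p.2 k) /
      (1 + ∑ k ∈ Finset.Icc 1 r, p.2 k)) * p.1 i,
   p.2)

/-- The iterate `A^i(N)` of the abrasion; `A^i(N)` has `r − i` edges. -/
def abrIterNP (p : (ℕ → ℚ) × (ℕ → ℚ)) (r : ℕ) : ℕ → (ℕ → ℚ) × (ℕ → ℚ)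
  | 0 => p
  | i + 1 => abrNP (abrIterNP p r i) (r - i)

/-- Condition (A1): `1 + ht(N) < L_1/M_1`. -/
def CondA1 (p : (ℕ → ℚ) × (ℕ → ℚ)) (r : ℕ) : Prop :=
  1 + htNP p r < p.1 1 / p.2 1

/-- Condition (A2): for `0 ≤ i ≤ r−1`, `A^i(N)` is a special convenient integral datum
and `L̃^{(i)}_1/M̃^{(i)}_1 ∈ ℕ`; for `0 ≤ i ≤ r−2`,
`(1 + M̃^{(i)}_1 + ⋯ + M̃^{(i)}_{r−i−1})·(L̃^{(i)}_{r−i}/M̃^{(i)}_{r−i}) ∈ ℕ`. -/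
def CondA2 (p : (ℕ → ℚ) × (ℕ → ℚ)) (r : ℕ) : Prop :=
  (∀ i, i ≤ r - 1 → IsSCI (abrIterNP p r i) (r - i) ∧
    ∃ a : ℕ, (abrIterNP p r i).1 1 / (abrIterNP p r i).2 1 = a) ∧
  (∀ i, i + 2 ≤ r → ∃ a : ℕ,
    (1 + ∑ k ∈ Finset.Icc 1 (r - i - 1), (abrIterNP p r i).2 k) *
      ((abrIterNP p r i).1 (r - i) / (abrIterNP p r i).2 (r - i)) = a)

/-- Condition (A3): for `0 ≤ i ≤ r−1`,
`gcd(1 + ht(A^i(N)), L̃^{(i)}_1, …, L̃^{(i)}_{r−i}) = 1` (the gcd of the integer-valued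
rationals being taken via their numerators). -/
def CondA3 (p : (ℕ → ℚ) × (ℕ → ℚ)) (r : ℕ) : Prop :=
  ∀ i, i ≤ r - 1 →
    Nat.gcd (1 + htNP (abrIterNP p r i) (r - i)).num.natAbs
      ((Finset.Icc 1 (r - i)).gcd fun k => ((abrIterNP p r i).1 k).num.natAbs) = 1

/-! Auxiliary lemmas -/

lemma exists_prime_factorization_lt {a b : ℕ} (ha : a ≠ 0) (hb : b ≠ 0) (h : ¬ a ∣ b) :
    ∃ q, q.Prime ∧ b.factorization q < a.factorization q := by
  by_contra hcon
  push_neg at hcon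
  apply h
  rw [← Nat.factorization_le_iff_dvd ha hb, Finsupp.le_def]
  intro q
  by_cases hq : q.Prime
  · exact not_lt.mp (fun hlt => absurd (hcon q hq) (not_le.mpr hlt))
  · simp [Nat.factorization_eq_zero_of_not_prime _ hq]

lemma prime_dvd_of_one_le_factorization {q n : ℕ} (hq : q.Prime) (hn : n ≠ 0)
    (h : 1 ≤ n.factorization q) : q ∣ n := by
  have := (Nat.Prime.pow_dvd_iff_le_factorization (k := 1) hq hn).mpr h
  simpa using this

lemma fact_mul_eq {a b c d : ℕ} (ha : a ≠ 0) (hb : b ≠ 0) (hc : c ≠ 0) (hd : d ≠ 0)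
    (h : a * b = c * d) (q : ℕ) :
    a.factorization q + b.factorization q = c.factorization q + d.factorization q := by
  have h' : (a * b).factorization = (c * d).factorization := by rw [h]
  rw [Nat.factorization_mul ha hb, Nat.factorization_mul hc hd] at h'
  have := DFunLike.congr_fun h' q
  simpa using this

lemma core_merle (r : ℕ) (s L M γ : ℕ → ℕ)
    (hs0 : s 0 = 1) (hspos : ∀ m, 0 < s m)
    (hLpos : ∀ k, 1 ≤ k → k ≤ r → 0 < L k)
    (hγpos : ∀ k, 1 ≤ k → k ≤ r → 0 < γ k)
    (hsrec : ∀ k, 1 ≤ k → k ≤ r → s k = s (k-1) + M k)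
    (hγ0 : γ 0 = s r)
    (hrel : ∀ k, 1 ≤ k → k ≤ r → γ k * M k = s (k-1) * L k)
    (hI : ∀ k, 1 ≤ k → k ≤ r → ∀ j, 1 ≤ j → j ≤ k → s r ∣ s k * L j)
    (hC : ∀ k, 1 ≤ k → k ≤ r → s r ∣ s k * γ k)
    (hG : ∀ k, 1 ≤ k → k ≤ r →
      Nat.gcd (s k) ((Finset.Icc 1 k).gcd (fun j => s k * L j / s r)) = 1) :
    ∀ k, k ≤ r → (∀ j, 1 ≤ j → j ≤ k → s (j-1) ∣ s j) ∧
      s k * (Finset.range (k+1)).gcd γ = s r := by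
  intro k
  induction k with
  | zero =>
    intro _
    constructor
    · intro j hj1 hj0; omega
    · have : (Finset.range 1).gcd γ = γ 0 := by simp [Finset.range_one]
      rw [this, hγ0, hs0, one_mul]
  | succ k ih =>
    intro hk1
    have hkr : k ≤ r := by omega
    obtain ⟨chain, hek⟩ := ih hkr
    have hk1r : 1 ≤ k + 1 := by omega
    set ek : ℕ := (Finset.range (k+1)).gcd γ with hekdef
    set ek1 : ℕ := (Finset.range (k+2)).gcd γ with hek1def
    have hgcd_succ : ek1 = Nat.gcd (γ (k+1)) ek := by
      rw [hek1def, Finset.range_add_one, Finset.gcd_insert]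
      rfl
    have hsr_ne : s r ≠ 0 := (hspos r).ne'
    have hsk_ne : s k ≠ 0 := (hspos k).ne'
    have hsk1_ne : s (k+1) ≠ 0 := (hspos (k+1)).ne'
    have hek_ne : ek ≠ 0 := by
      intro h0; rw [h0, mul_zero] at hek; exact hsr_ne hek.symm
    have hstep : s k ∣ s (k+1) := by
      by_contra hnd
      obtain ⟨q, hq, hlt⟩ := exists_prime_factorization_lt hsk_ne hsk1_ne hnd
      have hw1 : 1 ≤ (s k).factorization q := by omega
      have hqdvdsk : q ∣ s k := prime_dvd_of_one_le_factorization hq hsk_ne hw1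
      rcases Nat.eq_zero_or_pos k with hk0 | hkpos
      · rw [hk0, hs0] at hqdvdsk
        exact hq.one_lt.ne' (Nat.dvd_one.mp hqdvdsk)
      · have hGk := hG k hkpos hkr
        have hnotdvd : ¬ q ∣ (Finset.Icc 1 k).gcd (fun j => s k * L j / s r) := by
          intro hd
          have : q ∣ 1 := hGk ▸ Nat.dvd_gcd hqdvdsk hd
          exact hq.one_lt.ne' (Nat.dvd_one.mp this)
        have hexj : ∃ j ∈ Finset.Icc 1 k, ¬ q ∣ s k * L j / s r := by
          by_contra hcon
          push_neg at hcon
          exact hnotdvd (Finset.dvd_gcd hcon)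
        obtain ⟨j, hjmem, hjnd⟩ := hexj
        obtain ⟨hj1, hjk⟩ := Finset.mem_Icc.mp hjmem
        have hdvdI : s r ∣ s k * L j := hI k hkpos hkr j hj1 hjk
        have htj : (s k * L j / s r) * s r = s k * L j := Nat.div_mul_cancel hdvdI
        have hLj_ne : L j ≠ 0 := (hLpos j hj1 (le_trans hjk hkr)).ne'
        have htj_ne : s k * L j / s r ≠ 0 := by
          intro h0; rw [h0, zero_mul] at htj
          exact (Nat.mul_ne_zero hsk_ne hLj_ne) htj.symm
        have hvtj : (s k * L j / s r).factorization q = 0 :=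
          Nat.factorization_eq_zero_of_not_dvd hjnd
        have heq1 : (s k * L j / s r).factorization q + (s r).factorization q
            = (s k).factorization q + (L j).factorization q :=
          fact_mul_eq htj_ne hsr_ne hsk_ne hLj_ne htj q
        have hdvdI2 : s r ∣ s (k+1) * L j := hI (k+1) hk1r hk1 j hj1 (by omega)
        have hle : (s r).factorization q ≤ (s (k+1) * L j).factorization q := by
          have := (Nat.factorization_le_iff_dvd hsr_ne
            (Nat.mul_ne_zero hsk1_ne hLj_ne)).mpr hdvdI2
          exact Finsupp.le_def.mp this q
        rw [Nat.factorization_mul hsk1_ne hLj_ne, Finsupp.add_apply] at hle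
        omega
    have hlow : s r ∣ s (k+1) * ek1 := by
      rw [hgcd_succ, ← Nat.gcd_mul_left]
      apply Nat.dvd_gcd
      · exact hC (k+1) hk1r hk1
      · obtain ⟨c, hc⟩ := hstep
        rw [hc, mul_right_comm, hek]
        exact dvd_mul_right _ _
    have hek1_ne : ek1 ≠ 0 := by
      rw [hgcd_succ]
      exact Nat.gcd_ne_zero_left (hγpos (k+1) hk1r hk1).ne'
    have hup : s (k+1) * ek1 ∣ s r := by
      by_contra hnd
      obtain ⟨q, hq, hlt⟩ := exists_prime_factorization_lt
        (Nat.mul_ne_zero hsk1_ne hek1_ne) hsr_ne hnd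
      rw [Nat.factorization_mul hsk1_ne hek1_ne, Finsupp.add_apply] at hlt
      set α := (s r).factorization q with hα
      set σ := (s (k+1)).factorization q with hσ
      set v := ek1.factorization q with hv
      have hd0 : ek1 ∣ s r := by
        rw [← hγ0]
        exact Finset.gcd_dvd (Finset.mem_range.mpr (by omega))
      have hvα : v ≤ α := by
        have := (Nat.factorization_le_iff_dvd hek1_ne hsr_ne).mpr hd0
        exact Finsupp.le_def.mp this q
      have hσ1 : 1 ≤ σ := by omega
      have hqsk1 : q ∣ s (k+1) := prime_dvd_of_one_le_factorization hq hsk1_ne hσ1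
      have chain' : ∀ j, 1 ≤ j → j ≤ k + 1 → s (j-1) ∣ s j := by
        intro j hj1 hjk1
        rcases Nat.lt_or_ge j (k+1) with h | h
        · exact chain j hj1 (by omega)
        · have : j = k + 1 := by omega
          rw [this]; simpa using hstep
      have hkey : ∀ j, 1 ≤ j → j ≤ k + 1 → q ∣ s (k+1) * L j / s r := by
        intro j hj1 hjk1
        have hjr : j ≤ r := by omega
        have hγj_ne : γ j ≠ 0 := (hγpos j hj1 hjr).ne'
        have hLj_ne : L j ≠ 0 := (hLpos j hj1 hjr).ne'
        have hsj1_ne : s (j-1) ≠ 0 := (hspos (j-1)).ne'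
        have hMj_ne : M j ≠ 0 := by
          intro h0
          have := hrel j hj1 hjr
          rw [h0, mul_zero] at this
          exact (Nat.mul_ne_zero hsj1_ne hLj_ne) this.symm
        have hd : ek1 ∣ γ j := Finset.gcd_dvd (Finset.mem_range.mpr (by omega))
        have hvγ : v ≤ (γ j).factorization q := by
          have := (Nat.factorization_le_iff_dvd hek1_ne hγj_ne).mpr hd
          exact Finsupp.le_def.mp this q
        have hMval : (s (j-1)).factorization q ≤ (M j).factorization q := by
          have hd1 : q ^ (s (j-1)).factorization q ∣ s (j-1) := Nat.ordProj_dvd _ _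
          have hd2 : q ^ (s (j-1)).factorization q ∣ s j :=
            hd1.trans (chain' j hj1 hjk1)
          have hdM : q ^ (s (j-1)).factorization q ∣ M j := by
            have hMeq : M j = s j - s (j-1) := by
              rw [hsrec j hj1 hjr]; omega
            rw [hMeq]
            exact Nat.dvd_sub hd2 hd1
          exact (Nat.Prime.pow_dvd_iff_le_factorization hq hMj_ne).mp hdM
        have hrelval : (γ j).factorization q + (M j).factorization q
            = (s (j-1)).factorization q + (L j).factorization q :=
          fact_mul_eq hγj_ne hMj_ne hsj1_ne hLj_ne (hrel j hj1 hjr) q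
        have hLval : v ≤ (L j).factorization q := by omega
        have hdvdI : s r ∣ s (k+1) * L j := hI (k+1) hk1r hk1 j hj1 hjk1
        have htj : (s (k+1) * L j / s r) * s r = s (k+1) * L j := Nat.div_mul_cancel hdvdI
        have htj_ne : s (k+1) * L j / s r ≠ 0 := by
          intro h0; rw [h0, zero_mul] at htj
          exact (Nat.mul_ne_zero hsk1_ne hLj_ne) htj.symm
        have heq1 : (s (k+1) * L j / s r).factorization q + α
            = σ + (L j).factorization q :=
          fact_mul_eq htj_ne hsr_ne hsk1_ne hLj_ne htj q
        apply prime_dvd_of_one_le_factorization hq htj_ne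
        omega
      have hGk1 := hG (k+1) hk1r hk1
      have : q ∣ 1 := by
        rw [← hGk1]
        apply Nat.dvd_gcd hqsk1
        apply Finset.dvd_gcd
        intro j hj
        obtain ⟨hj1, hjk1⟩ := Finset.mem_Icc.mp hj
        exact hkey j hj1 hjk1
      exact hq.one_lt.ne' (Nat.dvd_one.mp this)
    refine ⟨?_, Nat.dvd_antisymm hup hlow⟩
    intro j hj1 hjk1
    rcases Nat.lt_or_ge j (k+1) with h | h
    · exact chain j hj1 (by omega)
    · have : j = k + 1 := by omega
      rw [this]; simpa using hstep

lemma sumS_pos (p : (ℕ → ℚ) × (ℕ → ℚ)) (r : ℕ)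
    (hpos : ∀ k, 1 ≤ k → k ≤ r → 0 < p.2 k) (m : ℕ) (hm : m ≤ r) :
    0 < 1 + ∑ k ∈ Finset.Icc 1 m, p.2 k := by
  have : (0:ℚ) ≤ ∑ k ∈ Finset.Icc 1 m, p.2 k := by
    apply Finset.sum_nonneg
    intro k hk
    obtain ⟨h1, h2⟩ := Finset.mem_Icc.mp hk
    exact (hpos k h1 (h2.trans hm)).le
  linarith

lemma abrIter_formula (p : (ℕ → ℚ) × (ℕ → ℚ)) (r : ℕ)
    (hpos : ∀ k, 1 ≤ k → k ≤ r → 0 < p.2 k) :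
    ∀ i, i ≤ r → abrIterNP p r i =
      (fun j => ((1 + ∑ k ∈ Finset.Icc 1 (r - i), p.2 k) /
        (1 + ∑ k ∈ Finset.Icc 1 r, p.2 k)) * p.1 j, p.2) := by
  intro i
  induction i with
  | zero =>
    intro _
    have hX : (1 + ∑ k ∈ Finset.Icc 1 r, p.2 k) ≠ 0 := (sumS_pos p r hpos r le_rfl).ne'
    show p = _
    rw [Nat.sub_zero]
    have : (fun j => ((1 + ∑ k ∈ Finset.Icc 1 r, p.2 k) /
        (1 + ∑ k ∈ Finset.Icc 1 r, p.2 k)) * p.1 j) = p.1 := by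
      funext j
      rw [div_self hX, one_mul]
    rw [this]
  | succ i ih =>
    intro hi
    have hir : i ≤ r := by omega
    show abrNP (abrIterNP p r i) (r - i) = _
    rw [ih hir]
    unfold abrNP
    simp only
    have hB : (1 + ∑ k ∈ Finset.Icc 1 (r - i), p.2 k) ≠ 0 :=
      (sumS_pos p r hpos (r - i) (by omega)).ne'
    have hsub : r - i - 1 = r - (i + 1) := by omega
    rw [hsub]
    congr 1
    funext j
    rw [← mul_assoc, div_mul_div_comm, mul_comm (1 + ∑ k ∈ Finset.Icc 1 (r - (i+1)), p.2 k),
      mul_div_mul_left _ _ hB]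


/-- For a special convenient integral Newton-polygon datum `N` with
`r ≥ 1` edges satisfying (A1)–(A3), with `γ_0 := 1 + M_1 + ⋯ + M_r` and
`γ_i := (1 + M_1 + ⋯ + M_{i−1})·L_i/M_i`, setting `e_k := gcd(γ_0, …, γ_k)` and
`n_k := e_{k−1}/e_k`, one has `(n_k − 1)·γ_k = L_k` and
`n_1⋯n_{k−1}·(n_k − 1) = M_k` for every `1 ≤ k ≤ r`; that is, the Merle datum of
`(γ_0, …, γ_r)` equals `N`. -/
theorem abrasion_merle_datum_eq
    (p : (ℕ → ℚ) × (ℕ → ℚ)) (r : ℕ) (hr : 1 ≤ r)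
    (hSCI : IsSCI p r) (h1 : CondA1 p r) (h2 : CondA2 p r) (h3 : CondA3 p r)
    (γ : ℕ → ℕ)
    (hγ0 : (γ 0 : ℚ) = 1 + htNP p r)
    (hγ : ∀ i, 1 ≤ i → i ≤ r →
      (γ i : ℚ) = (1 + ∑ k ∈ Finset.Icc 1 (i - 1), p.2 k) * (p.1 i / p.2 i))
    (n : ℕ → ℕ)
    (hn : ∀ k, 1 ≤ k → k ≤ r →
      n k = (Finset.range k).gcd γ / (Finset.range (k + 1)).gcd γ) :
    ∀ k, 1 ≤ k → k ≤ r →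
      ((n k : ℚ) - 1) * γ k = p.1 k ∧
      ((∏ j ∈ Finset.Icc 1 (k - 1), n j : ℕ) : ℚ) * ((n k : ℚ) - 1) = p.2 k := by
  classical
  obtain ⟨hCan, hInt, hSpec⟩ := hSCI
  have hMpos : ∀ k, 1 ≤ k → k ≤ r → 0 < p.2 k := fun k h1' h2' => (hCan.1 k h1' h2').2
  set Ln : ℕ → ℕ := fun k => (p.1 k).num.toNat with hLndef
  set Mn : ℕ → ℕ := fun k => (p.2 k).num.toNat with hMndef
  have hLcast : ∀ k, 1 ≤ k → k ≤ r → ((Ln k : ℚ) = p.1 k ∧ 0 < Ln k) := by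
    intro k hk1 hk2
    obtain ⟨⟨a, ha, hae⟩, _⟩ := hInt k hk1 hk2
    have hlk : Ln k = a := by
      simp only [hLndef, hae, Rat.num_natCast, Int.toNat_natCast]
    rw [hlk, hae]
    exact ⟨rfl, ha⟩
  have hMcast : ∀ k, 1 ≤ k → k ≤ r → ((Mn k : ℚ) = p.2 k ∧ 0 < Mn k) := by
    intro k hk1 hk2
    obtain ⟨_, ⟨b, hb, hbe⟩⟩ := hInt k hk1 hk2
    have hmk : Mn k = b := by
      simp only [hMndef, hbe, Rat.num_natCast, Int.toNat_natCast]
    rw [hmk, hbe]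
    exact ⟨rfl, hb⟩
  set s : ℕ → ℕ := fun m => 1 + ∑ k ∈ Finset.Icc 1 m, Mn k with hsdef
  have hs0 : s 0 = 1 := by simp [hsdef]
  have hspos : ∀ m, 0 < s m := by
    intro m; simp only [hsdef]; omega
  have hScast : ∀ m, m ≤ r → ((s m : ℚ)) = 1 + ∑ k ∈ Finset.Icc 1 m, p.2 k := by
    intro m hm
    simp only [hsdef]
    push_cast
    congr 1
    refine Finset.sum_congr rfl (fun k hk => ?_)
    obtain ⟨hk1, hk2⟩ := Finset.mem_Icc.mp hk
    exact (hMcast k hk1 (hk2.trans hm)).1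
  have hsrneQ : ((s r : ℚ)) ≠ 0 := (Nat.cast_pos.mpr (hspos r)).ne'
  have hIter : ∀ k, 1 ≤ k → k ≤ r → abrIterNP p r (r - k) =
      (fun j => ((s k : ℚ) / (s r : ℚ)) * p.1 j, p.2) := by
    intro k hk1 hk2
    rw [abrIter_formula p r hMpos (r - k) (by omega), Nat.sub_sub_self hk2,
        ← hScast k hk2, ← hScast r le_rfl]
  -- integrality of abraded data
  have hIval : ∀ k, 1 ≤ k → k ≤ r → ∀ j, 1 ≤ j → j ≤ k →
      s r ∣ s k * Ln j ∧
      (((s k * Ln j / s r : ℕ)) : ℚ) = ((s k : ℚ) / (s r : ℚ)) * p.1 j := by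
    intro k hk1 hk2 j hj1 hjk
    have hi : r - k ≤ r - 1 := by omega
    have hInt' := (h2.1 (r - k) hi).1.2.1
    rw [Nat.sub_sub_self hk2, hIter k hk1 hk2] at hInt'
    obtain ⟨⟨a, ha, hae⟩, _⟩ := hInt' j hj1 hjk
    have hae' : ((s k : ℚ) / (s r : ℚ)) * p.1 j = (a : ℚ) := hae
    have hq : (s k : ℚ) * (Ln j : ℚ) = (a : ℚ) * (s r : ℚ) := by
      rw [(hLcast j hj1 (hjk.trans hk2)).1]
      rw [div_mul_eq_mul_div, div_eq_iff hsrneQ] at hae'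
      exact hae'
    have hnat : s k * Ln j = a * s r := by exact_mod_cast hq
    have hdiv : s k * Ln j / s r = a := Nat.div_eq_of_eq_mul_left (hspos r) hnat
    constructor
    · exact ⟨a, by rw [hnat, mul_comm]⟩
    · rw [hdiv, ← hae']
  have hIdvd : ∀ k, 1 ≤ k → k ≤ r → ∀ j, 1 ≤ j → j ≤ k → s r ∣ s k * Ln j := by
    intro k hk1 hk2 j hj1 hjk
    exact (hIval k hk1 hk2 j hj1 hjk).1
  -- condition (A3)
  have hGn : ∀ k, 1 ≤ k → k ≤ r →
      Nat.gcd (s k) ((Finset.Icc 1 k).gcd fun j => s k * Ln j / s r) = 1 := by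
    intro k hk1 hk2
    have h3' := h3 (r - k) (by omega)
    rw [Nat.sub_sub_self hk2, hIter k hk1 hk2] at h3'
    have h3'' : Nat.gcd ((1 + ∑ j ∈ Finset.Icc 1 k, p.2 j : ℚ)).num.natAbs
        ((Finset.Icc 1 k).gcd fun j =>
          (((s k : ℚ) / (s r : ℚ)) * p.1 j).num.natAbs) = 1 := h3'
    rw [← hScast k hk2] at h3''
    rw [Rat.num_natCast] at h3''
    have hfun : ((Finset.Icc 1 k).gcd fun j =>
        (((s k : ℚ) / (s r : ℚ)) * p.1 j).num.natAbs)
        = (Finset.Icc 1 k).gcd fun j => s k * Ln j / s r := by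
      apply Finset.gcd_congr rfl
      intro j hj
      obtain ⟨hj1, hjk⟩ := Finset.mem_Icc.mp hj
      rw [← (hIval k hk1 hk2 j hj1 hjk).2, Rat.num_natCast]
      exact Int.natAbs_natCast _
    rw [hfun] at h3''
    simpa using h3''
  -- condition (A2), giving s r ∣ s k * γ k
  have hCdvd : ∀ k, 1 ≤ k → k ≤ r → s r ∣ s k * γ k := by
    intro k hk1 hk2
    rcases Nat.lt_or_ge k 2 with hk | hk
    · -- k = 1
      have hkeq : k = 1 := by omega
      subst hkeq
      obtain ⟨a, hae⟩ := (h2.1 (r - 1) (by omega)).2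
      rw [hIter 1 le_rfl hk2] at hae
      have hae' : ((s 1 : ℚ) / (s r : ℚ)) * p.1 1 / p.2 1 = (a : ℚ) := hae
      have hγ1 : (γ 1 : ℚ) = p.1 1 / p.2 1 := by
        have := hγ 1 le_rfl hk2
        simpa using this
      have hM1 : p.2 1 ≠ 0 := (hMpos 1 le_rfl hk2).ne'
      have hq : (s 1 : ℚ) * (γ 1 : ℚ) = (a : ℚ) * (s r : ℚ) := by
        rw [hγ1]
        field_simp at hae' ⊢
        linear_combination hae'
      have hnat : s 1 * γ 1 = a * s r := by exact_mod_cast hq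
      exact ⟨a, by rw [hnat]; ring⟩
    · -- k ≥ 2
      obtain ⟨a, hae⟩ := h2.2 (r - k) (by omega)
      rw [Nat.sub_sub_self hk2, hIter k (by omega) hk2] at hae
      have hae' : (1 + ∑ j ∈ Finset.Icc 1 (k - 1), p.2 j) *
          (((s k : ℚ) / (s r : ℚ)) * p.1 k / p.2 k) = (a : ℚ) := hae
      rw [← hScast (k - 1) (by omega)] at hae'
      have hγk := hγ k (by omega) hk2
      rw [← hScast (k - 1) (by omega)] at hγk
      have hMk : p.2 k ≠ 0 := (hMpos k (by omega) hk2).ne'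
      have hq : (s k : ℚ) * (γ k : ℚ) = (a : ℚ) * (s r : ℚ) := by
        rw [hγk]
        field_simp at hae' ⊢
        linear_combination hae'
      have hnat : s k * γ k = a * s r := by exact_mod_cast hq
      exact ⟨a, by rw [hnat]; ring⟩
  -- relation γ k * M k = s (k-1) * L k
  have hrel : ∀ k, 1 ≤ k → k ≤ r → γ k * Mn k = s (k-1) * Ln k := by
    intro k hk1 hk2
    have hγk := hγ k hk1 hk2
    rw [← hScast (k - 1) (by omega)] at hγk
    have hMk : p.2 k ≠ 0 := (hMpos k hk1 hk2).ne'
    have hq : (γ k : ℚ) * (Mn k : ℚ) = (s (k-1) : ℚ) * (Ln k : ℚ) := by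
      rw [(hMcast k hk1 hk2).1, (hLcast k hk1 hk2).1, hγk]
      field_simp
    exact_mod_cast hq
  have hsrec : ∀ k, 1 ≤ k → k ≤ r → s k = s (k-1) + Mn k := by
    intro k hk1 hk2
    obtain ⟨j, rfl⟩ : ∃ j, k = j + 1 := ⟨k - 1, by omega⟩
    simp only [hsdef, Nat.add_sub_cancel]
    rw [Finset.sum_Icc_succ_top (by omega : 1 ≤ j + 1)]
    omega
  have hLpos : ∀ k, 1 ≤ k → k ≤ r → 0 < Ln k := fun k hk1 hk2 => (hLcast k hk1 hk2).2
  have hγpos : ∀ k, 1 ≤ k → k ≤ r → 0 < γ k := by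
    intro k hk1 hk2
    rcases Nat.eq_zero_or_pos (γ k) with h0 | h
    · exfalso
      have := hrel k hk1 hk2
      rw [h0, zero_mul] at this
      exact (Nat.mul_ne_zero (hspos (k-1)).ne' (hLpos k hk1 hk2).ne') this.symm
    · exact h
  have hγ0n : γ 0 = s r := by
    have hq : (γ 0 : ℚ) = ((s r : ℚ)) := by
      rw [hScast r le_rfl]; exact hγ0
    exact_mod_cast hq
  have hmain := core_merle r s Ln Mn γ hs0 hspos hLpos hγpos hsrec hγ0n hrel hIdvd hCdvd hGn
  -- step ratios
  have hnj : ∀ j, 1 ≤ j → j ≤ r → s j = s (j-1) * n j := by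
    intro j hj1 hjr
    obtain ⟨chainj, heqj⟩ := hmain j hjr
    obtain ⟨_, heqj'⟩ := hmain (j-1) (by omega)
    rw [show (j-1)+1 = j from by omega] at heqj'
    obtain ⟨c, hc⟩ := chainj j hj1 le_rfl
    have hE2ne : (Finset.range (j+1)).gcd γ ≠ 0 := by
      intro h0; rw [h0, mul_zero] at heqj; exact (hspos r).ne' heqj.symm
    have hE1 : (Finset.range j).gcd γ = c * (Finset.range (j+1)).gcd γ := by
      apply Nat.eq_of_mul_eq_mul_left (hspos (j-1))
      rw [heqj', ← mul_assoc, ← hc, heqj]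
    have hnjeq : n j = c := by
      rw [hn j hj1 hjr, hE1, Nat.mul_div_cancel _ (Nat.pos_of_ne_zero hE2ne)]
    rw [hc, hnjeq]
  have hprod : ∀ m, m ≤ r → (∏ j ∈ Finset.Icc 1 m, n j) = s m := by
    intro m
    induction m with
    | zero => intro _; simp [hs0]
    | succ m ihm =>
      intro hm
      rw [Finset.prod_Icc_succ_top (by omega : 1 ≤ m + 1), ihm (by omega),
        hnj (m+1) (by omega) hm, Nat.add_sub_cancel]
  intro k hk1 hkr
  have hs1ne : ((s (k-1) : ℚ)) ≠ 0 := (Nat.cast_pos.mpr (hspos (k-1))).ne'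
  have hp2ne : p.2 k ≠ 0 := (hMpos k hk1 hkr).ne'
  have hnkq : ((n k : ℚ)) * (s (k-1) : ℚ) = (s k : ℚ) := by
    have h' := hnj k hk1 hkr
    rw [h']; push_cast; ring
  have hskq : (s k : ℚ) = (s (k-1) : ℚ) + p.2 k := by
    rw [hsrec k hk1 hkr]
    push_cast
    rw [(hMcast k hk1 hkr).1]
  have hc1 : (γ k : ℚ) * p.2 k = (s (k-1) : ℚ) * p.1 k := by
    have h' := hrel k hk1 hkr
    have hq := congrArg (fun x : ℕ => (x : ℚ)) h'
    push_cast at hq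
    rw [(hMcast k hk1 hkr).1, (hLcast k hk1 hkr).1] at hq
    exact hq
  constructor
  · have hne : (s (k-1) : ℚ) * p.2 k ≠ 0 := mul_ne_zero hs1ne hp2ne
    apply mul_right_cancel₀ hne
    linear_combination ((n k : ℚ) - 1) * (s (k-1) : ℚ) * hc1
      + (s (k-1) : ℚ) * p.1 k * hnkq + (s (k-1) : ℚ) * p.1 k * hskq
  · rw [hprod (k-1) (by omega)]
    linear_combination hnkq + hskq
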